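/- arXiv:math-ph/0112034 — 6 statements merged into one kernel-verified Lean document; each statement's English description precedes it below -/
import Mathlib

section
/- Let μ_1 and μ_2 be two independent random probability vectors, each uniformly distributed on the simplex Λ_N. Then the expected affinity satisfies E(A(μ_1, μ_2)) = N · ((N−1)! · Γ(3/2) / Γ(N + 1/2))². -/
/-!
Under the affine chart `x ↦ (1 - ∑ xᵢ, x)`, the normalized `n`-dimensional Hausdorff measure on
`Λ_{n+1}` is the pushforward of normalized Lebesgue measure on the corner simplex
`{x ∈ ℝⁿ | x ≥ 0, ∑ xᵢ ≤ 1}`, since both are Haar measures on the hyperplane. Integrating out one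
coordinate at a time gives the Dirichlet integral
`∫_{x ≥ 0} (s - ∑ xᵢ)₊^a dx = Γ(a+1)/Γ(n+a+1) · s₊^(n+a)`, hence
`E √μ_α = n! Γ(3/2) / Γ(n + 3/2)` for the first coordinate, and for every coordinate by
permutation invariance. Independence factorizes `E √(μ_α ν_α) = (E √μ_α)²`; sum over `α`.
-/

open MeasureTheory

/-- The uniform probability measure on the simplex `Λ_N`, i.e. the normalized
Lebesgue (Hausdorff) measure on the standard simplex in `ℝ^N`. -/
noncomputable def uniformSimplex (N : ℕ) : Measure (Fin N → ℝ) :=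
  (μH[(N : ℝ) - 1] (stdSimplex ℝ (Fin N)))⁻¹ •
    (μH[(N : ℝ) - 1]).restrict (stdSimplex ℝ (Fin N))

/-- The affinity `A(μ, ν) = ∑_α √(μ_α ν_α)` of two probability vectors. -/
noncomputable def affinity {N : ℕ} (μ ν : Fin N → ℝ) : ℝ :=
  ∑ α, Real.sqrt (μ α * ν α)

open Set Module ProbabilityTheory
open scoped ENNReal Nat

-- `s₊ ^ a`; the indicator matters since `Real.rpow` does not vanish on negative bases.
noncomputable def truncPow (a s : ℝ) : ℝ≥0∞ :=
  (Ici 0).indicator (fun s => ENNReal.ofReal (s ^ a)) s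

@[fun_prop]
lemma measurable_truncPow (a : ℝ) : Measurable (truncPow a) :=
  Measurable.indicator (by fun_prop) measurableSet_Ici

lemma setLIntegral_Ici_truncPow_sub {a : ℝ} (ha : 0 ≤ a) (s : ℝ) :
    ∫⁻ t in Ici 0, truncPow a (s - t) = ENNReal.ofReal (a + 1)⁻¹ * truncPow (a + 1) s := by
  have hIcc : ∫⁻ t in Ici 0, truncPow a (s - t) =
      ∫⁻ t in Icc 0 s, ENNReal.ofReal ((s - t) ^ a) := by
    have : (fun t => truncPow a (s - t)) =
        (Iic s).indicator fun t => ENNReal.ofReal ((s - t) ^ a) := by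
      ext t; simp [truncPow, indicator, sub_nonneg]
    rw [this, setLIntegral_indicator measurableSet_Iic, inter_comm, Ici_inter_Iic]
  rw [hIcc]
  rcases lt_or_ge s 0 with hs | hs
  · simp [truncPow, hs]
  · rw [← ofReal_integral_eq_lintegral_ofReal, integral_Icc_eq_integral_Ioc,
      ← intervalIntegral.integral_of_le hs, intervalIntegral.integral_comp_sub_left (· ^ a),
      integral_rpow (.inl (by linarith)), truncPow, indicator_of_mem (mem_Ici.2 hs),
      ← ENNReal.ofReal_mul (by positivity)]
    · rw [sub_self, sub_zero, Real.zero_rpow (by linarith)]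
      ring_nf
    · exact ((Real.continuous_rpow_const ha).comp (continuous_const.sub continuous_id))
        |>.integrableOn_Icc
    · exact (ae_restrict_iff' measurableSet_Icc).2 (ae_of_all _ fun t ht =>
        Real.rpow_nonneg (by linarith [ht.2]) a)

lemma volume_restrict_Ici_zero_eq_pi (n : ℕ) :
    volume.restrict (Ici (0 : Fin n → ℝ)) = Measure.pi fun _ => volume.restrict (Ici 0) := by
  rw [← pi_univ_Ici, volume_pi, Measure.restrict_pi_pi]
  rfl

lemma setLIntegral_Ici_truncPow_sub_sum (n : ℕ) {a : ℝ} (ha : 0 ≤ a) (s : ℝ) :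
    ∫⁻ x in Ici (0 : Fin n → ℝ), truncPow a (s - ∑ i, x i) =
      ENNReal.ofReal (Real.Gamma (a + 1) / Real.Gamma (n + a + 1)) * truncPow (n + a) s := by
  induction n generalizing a s with
  | zero =>
    rw [Subsingleton.eq_univ_of_nonempty (s := Ici (0 : Fin 0 → ℝ)) nonempty_Ici]
    simp [div_self (Real.Gamma_pos_of_pos (by linarith : (0 : ℝ) < a + 1)).ne', volume_pi]
  | succ n ih =>
    let e := MeasurableEquiv.piFinSuccAbove (fun _ : Fin (n + 1) => ℝ) 0
    have he : MeasurePreserving e.symm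
        ((volume.restrict (Ici 0)).prod (volume.restrict (Ici (0 : Fin n → ℝ))))
        (volume.restrict (Ici 0)) := by
      simpa only [volume_restrict_Ici_zero_eq_pi] using
        (measurePreserving_piFinSuccAbove (fun _ => volume.restrict (Ici (0 : ℝ))) 0).symm
    have hsum (t : ℝ) (y : Fin n → ℝ) : s - ∑ i, e.symm (t, y) i = s - ∑ i, y i - t := by
      simp only [e, MeasurableEquiv.piFinSuccAbove_symm_apply, Fin.insertNthEquiv_zero,
        Fin.consEquiv_apply, Fin.sum_cons]
      ring
    rw [← he.lintegral_comp_emb e.symm.measurableEmbedding, lintegral_prod_symm _ (by fun_prop)]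
    simp_rw [hsum, setLIntegral_Ici_truncPow_sub ha]
    rw [lintegral_const_mul' _ _ ENNReal.ofReal_ne_top, ih (by linarith), ← mul_assoc,
      ← ENNReal.ofReal_mul (by positivity), Real.Gamma_add_one (by linarith : a + 1 ≠ 0)]
    congr 2
    · push_cast; field_simp; ring_nf
    · push_cast; ring

section Hausdorff

variable {E F : Type*} [NormedAddCommGroup E] [NormedSpace ℝ E] [FiniteDimensional ℝ E]
  [MeasurableSpace E] [BorelSpace E] [NormedAddCommGroup F] [NormedSpace ℝ F]
  [MeasurableSpace F] [BorelSpace F]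

/-- Both sides are Haar measures on the image of the linear part, transported by the isometry
`v ↦ f 0 + v`. -/
theorem exists_hausdorffMeasure_restrict_range_eq_smul_map (μ : Measure E)
    [μ.IsAddHaarMeasure] (f : E →ᵃ[ℝ] F) (hf : Function.Injective f) :
    ∃ c : ℝ≥0∞, c ≠ 0 ∧ c ≠ ∞ ∧ μH[finrank ℝ E].restrict (range f) = c • μ.map f := by
  let e : E ≃ₗ[ℝ] LinearMap.range f.linear :=
    LinearEquiv.ofInjective f.linear ((AffineMap.linear_injective_iff f).2 hf)
  have : (μH[finrank ℝ E] : Measure (LinearMap.range f.linear)).IsAddHaarMeasure := by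
    rw [e.finrank_eq]; infer_instance
  set c := Measure.addHaarScalarFactor
    (μH[finrank ℝ E] : Measure (LinearMap.range f.linear)) (μ.map e)
  have hc : μH[finrank ℝ E] = c • μ.map e := Measure.isAddLeftInvariant_eq_smul _ _
  have he : Measurable e := (LinearMap.continuous_of_finiteDimensional e.toLinearMap).measurable
  let g : LinearMap.range f.linear → F := fun v => f 0 + v
  have hg : Isometry g := (isometry_add_left (f 0)).comp isometry_subtype_coe
  have hfg : ⇑f = g ∘ e := by
    ext x
    show f x = f 0 + f.linear x
    simpa [add_comm] using f.map_vadd 0 x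
  refine ⟨c, by simpa using (Measure.addHaarScalarFactor_pos_of_isAddHaarMeasure _ _).ne',
    ENNReal.coe_ne_top, ?_⟩
  rw [hfg, range_comp, e.surjective.range_eq, image_univ,
    ← hg.map_hausdorffMeasure (.inl (by positivity)), hc, Measure.map_smul,
    Measure.map_map hg.continuous.measurable he]
  rfl

theorem cond_hausdorffMeasure_eq_map_cond (μ : Measure E) [μ.IsAddHaarMeasure]
    (f : E →ᵃ[ℝ] F) (hf : Function.Injective f) {t : Set F} (ht : MeasurableSet t)
    (htf : t ⊆ range f) :
    μH[finrank ℝ E][|t] = (μ[|f ⁻¹' t]).map f := by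
  obtain ⟨c, hc0, hctop, hc⟩ := exists_hausdorffMeasure_restrict_range_eq_smul_map μ f hf
  have hf_meas : Measurable f := f.continuous_of_finiteDimensional.measurable
  have hrestrict : μH[finrank ℝ E].restrict t = c • (μ.restrict (f ⁻¹' t)).map f := by
    rw [← Measure.restrict_restrict_of_subset htf, hc, Measure.restrict_smul,
      Measure.restrict_map hf_meas ht]
  have hmass : μH[finrank ℝ E] t = c * μ (f ⁻¹' t) := by
    rw [← Measure.restrict_apply_univ, hrestrict, Measure.smul_apply,
      Measure.map_apply hf_meas .univ, preimage_univ, Measure.restrict_apply_univ, smul_eq_mul]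
  rw [ProbabilityTheory.cond, ProbabilityTheory.cond, hrestrict, hmass, Measure.map_smul,
    smul_smul, ENNReal.mul_inv (.inl hc0) (.inl hctop), mul_right_comm,
    ENNReal.inv_mul_cancel hc0 hctop, one_mul]

end Hausdorff

lemma MeasureTheory.MeasurePreserving.map_cond {α : Type*} [MeasurableSpace α] {μ : Measure α}
    {f : α → α} (hf : MeasurePreserving f μ μ) {s : Set α} (hs : MeasurableSet s)
    (hfs : f ⁻¹' s = s) : (μ[|s]).map f = μ[|s] := by
  have hrestrict : (μ.restrict s).map f = μ.restrict s := by
    conv_lhs => rw [← hfs]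
    rw [← Measure.restrict_map hf.measurable hs, hf.map_eq]
  rw [ProbabilityTheory.cond, Measure.map_smul, hrestrict]

noncomputable def simplexChart (n : ℕ) : (Fin n → ℝ) →ᵃ[ℝ] (Fin (n + 1) → ℝ) where
  toFun x := Fin.cons (1 - ∑ i, x i) x
  linear := (-∑ i, LinearMap.proj i).vecCons LinearMap.id
  map_vadd' x v := by
    ext j
    refine Fin.cases ?_ (fun i => ?_) j
    · simp only [Pi.vadd_apply', vadd_eq_add, Finset.sum_add_distrib, Fin.cons_zero,
        LinearMap.vecCons_apply, LinearMap.neg_apply, LinearMap.coe_sum, LinearMap.coe_proj,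
        Finset.sum_apply, Function.eval, LinearMap.id_coe, id_eq, Matrix.cons_val_zero]
      ring
    · simp

lemma simplexChart_apply (n : ℕ) (x : Fin n → ℝ) :
    simplexChart n x = Fin.cons (1 - ∑ i, x i) x := rfl

lemma simplexChart_injective (n : ℕ) : Function.Injective (simplexChart n) := fun x y h => by
  simpa [simplexChart_apply] using congrArg Fin.tail h

lemma stdSimplex_subset_range_simplexChart (n : ℕ) :
    stdSimplex ℝ (Fin (n + 1)) ⊆ range (simplexChart n) := fun p hp => by
  refine ⟨Fin.tail p, ?_⟩
  have hp0 : p 0 = 1 - ∑ i, Fin.tail p i := by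
    rw [← hp.2, Fin.sum_univ_succ]; simp [Fin.tail]
  rw [simplexChart_apply, ← hp0, Fin.cons_self_tail]

lemma simplexChart_preimage_stdSimplex (n : ℕ) :
    simplexChart n ⁻¹' stdSimplex ℝ (Fin (n + 1)) =
      (fun x => 1 - ∑ i, x i) ⁻¹' Ici 0 ∩ Ici 0 := by
  ext x
  simp [stdSimplex, simplexChart_apply, Fin.forall_fin_succ, Fin.sum_univ_succ, Pi.le_def]

lemma setLIntegral_simplexChart_preimage_stdSimplex (n : ℕ) (a : ℝ) :
    ∫⁻ x in simplexChart n ⁻¹' stdSimplex ℝ (Fin (n + 1)), ENNReal.ofReal ((1 - ∑ i, x i) ^ a) =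
      ∫⁻ x in Ici (0 : Fin n → ℝ), truncPow a (1 - ∑ i, x i) := by
  simp_rw [truncPow, ← indicator_comp_right (fun x : Fin n → ℝ => 1 - ∑ i, x i)]
  rw [setLIntegral_indicator (measurableSet_Ici.preimage (by fun_prop)),
    simplexChart_preimage_stdSimplex]
  rfl

instance (N : ℕ) : IsZeroOrProbabilityMeasure (uniformSimplex N) :=
  inferInstanceAs (IsZeroOrProbabilityMeasure μH[(N : ℝ) - 1][|stdSimplex ℝ (Fin N)])

lemma ae_nonneg_uniformSimplex (N : ℕ) : ∀ᵐ p ∂uniformSimplex N, ∀ α, 0 ≤ p α :=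
  (ae_cond_mem (isClosed_stdSimplex ℝ (Fin N)).measurableSet).mono fun _ hp => hp.1

lemma uniformSimplex_succ (n : ℕ) :
    uniformSimplex (n + 1) =
      (volume[|simplexChart n ⁻¹' stdSimplex ℝ (Fin (n + 1))]).map (simplexChart n) := by
  have hdim : ((n + 1 : ℕ) : ℝ) - 1 = finrank ℝ (Fin n → ℝ) := by simp
  rw [uniformSimplex, hdim]
  exact cond_hausdorffMeasure_eq_map_cond volume _ (simplexChart_injective n)
    (isClosed_stdSimplex _ _).measurableSet (stdSimplex_subset_range_simplexChart n)

lemma measurePreserving_comp_perm_uniformSimplex (N : ℕ) (σ : Equiv.Perm (Fin N)) :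
    MeasurePreserving (fun p : Fin N → ℝ => p ∘ σ) (uniformSimplex N) (uniformSimplex N) := by
  let e : (Fin N → ℝ) ≃ᵢ (Fin N → ℝ) := IsometryEquiv.piCongrLeft' (Y := fun _ => ℝ) σ.symm
  refine ⟨e.continuous.measurable, (e.measurePreserving_hausdorffMeasure _).map_cond
    (isClosed_stdSimplex _ _).measurableSet ?_⟩
  ext p
  simp only [stdSimplex, preimage_ofPred_eq, IsometryEquiv.piCongrLeft'_apply, Equiv.symm_symm,
    mem_ofPred_eq, Equiv.sum_comp σ p, and_congr_left_iff, e]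
  exact fun _ => σ.forall_congr_right (q := fun i => 0 ≤ p i)

lemma lintegral_rpow_apply_zero_uniformSimplex (n : ℕ) {a : ℝ} (ha : 0 ≤ a) :
    ∫⁻ p, ENNReal.ofReal (p 0 ^ a) ∂uniformSimplex (n + 1) =
      ENNReal.ofReal (n ! * Real.Gamma (a + 1) / Real.Gamma (n + a + 1)) := by
  have hvol : volume (simplexChart n ⁻¹' stdSimplex ℝ (Fin (n + 1))) =
      ENNReal.ofReal (n ! : ℝ)⁻¹ := by
    simpa [Real.Gamma_nat_eq_factorial, truncPow] using
      (setLIntegral_simplexChart_preimage_stdSimplex n 0).trans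
        (setLIntegral_Ici_truncPow_sub_sum n le_rfl 1)
  have hone : truncPow (n + a) 1 = 1 := by simp [truncPow]
  rw [uniformSimplex_succ,
    lintegral_map (by fun_prop) (simplexChart n).continuous_of_finiteDimensional.measurable,
    ProbabilityTheory.cond, lintegral_smul_measure]
  simp only [simplexChart_apply, Fin.cons_zero]
  rw [setLIntegral_simplexChart_preimage_stdSimplex, setLIntegral_Ici_truncPow_sub_sum n ha,
    hvol, hone, mul_one, ← ENNReal.ofReal_inv_of_pos (by positivity), inv_inv, smul_eq_mul,
    ← ENNReal.ofReal_mul (by positivity), mul_div_assoc]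

lemma lintegral_rpow_apply_uniformSimplex (n : ℕ) (α : Fin (n + 1)) {a : ℝ} (ha : 0 ≤ a) :
    ∫⁻ p, ENNReal.ofReal (p α ^ a) ∂uniformSimplex (n + 1) =
      ENNReal.ofReal (n ! * Real.Gamma (a + 1) / Real.Gamma (n + a + 1)) := by
  have h := (measurePreserving_comp_perm_uniformSimplex (n + 1) (Equiv.swap 0 α)).lintegral_comp
    (f := fun p => ENNReal.ofReal (p 0 ^ a)) (by fun_prop)
  simp only [Function.comp_apply, Equiv.swap_apply_left] at h
  rw [h, lintegral_rpow_apply_zero_uniformSimplex n ha]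

lemma affinity_nonneg {N : ℕ} (μ ν : Fin N → ℝ) : 0 ≤ affinity μ ν :=
  Finset.sum_nonneg fun _ _ => Real.sqrt_nonneg _

lemma lintegral_ofReal_affinity_prod {N : ℕ} (μ ν : Measure (Fin N → ℝ)) [SFinite ν]
    (hμ : ∀ᵐ p ∂μ, ∀ α, 0 ≤ p α) :
    ∫⁻ q, ENNReal.ofReal (affinity q.1 q.2) ∂μ.prod ν =
      ∑ α, (∫⁻ p, ENNReal.ofReal √(p α) ∂μ) * ∫⁻ p, ENNReal.ofReal √(p α) ∂ν := by
  simp_rw [affinity, ENNReal.ofReal_sum_of_nonneg fun α _ => Real.sqrt_nonneg _]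
  rw [lintegral_finsetSum _ fun α _ => by fun_prop]
  refine Finset.sum_congr rfl fun α _ => ?_
  rw [← lintegral_prod_mul (Measurable.aemeasurable (by fun_prop))
    (Measurable.aemeasurable (by fun_prop))]
  refine lintegral_congr_ae ?_
  filter_upwards [Measure.quasiMeasurePreserving_fst.ae hμ] with q hq
  rw [Real.sqrt_mul (hq α), ENNReal.ofReal_mul (Real.sqrt_nonneg _)]

theorem stmt2 (N : ℕ) (hN : 1 ≤ N) :
    ∫ p : (Fin N → ℝ) × (Fin N → ℝ), affinity p.1 p.2
        ∂((uniformSimplex N).prod (uniformSimplex N)) =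
      (N : ℝ) * ((Nat.factorial (N - 1) : ℝ) * Real.Gamma (3 / 2) /
        Real.Gamma ((N : ℝ) + 1 / 2)) ^ 2 := by
  obtain ⟨n, rfl⟩ : ∃ n, N = n + 1 := ⟨N - 1, by omega⟩
  have hmarg (α : Fin (n + 1)) : ∫⁻ p, ENNReal.ofReal √(p α) ∂uniformSimplex (n + 1) =
      ENNReal.ofReal (n ! * Real.Gamma (3 / 2) / Real.Gamma ((n + 1 : ℕ) + 1 / 2)) := by
    convert lintegral_rpow_apply_uniformSimplex n α (a := 1 / 2) (by norm_num) using 4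
    · rw [Real.sqrt_eq_rpow]
    · norm_num
    · push_cast; ring_nf
  have hmeas : Measurable fun q : (Fin (n + 1) → ℝ) × (Fin (n + 1) → ℝ) => affinity q.1 q.2 := by
    unfold affinity; fun_prop
  rw [integral_eq_lintegral_of_nonneg_ae (μ := (uniformSimplex _).prod (uniformSimplex _))
      (ae_of_all _ fun q => affinity_nonneg q.1 q.2) hmeas.aestronglyMeasurable,
    lintegral_ofReal_affinity_prod _ _ (ae_nonneg_uniformSimplex _)]
  simp only [hmarg, Finset.sum_const, Finset.card_univ, Fintype.card_fin, nsmul_eq_mul]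
  rw [ENNReal.toReal_mul, ENNReal.toReal_mul, ENNReal.toReal_natCast,
    ENNReal.toReal_ofReal (by positivity), Nat.add_sub_cancel, sq]
end

section
/- Let φ be a unit vector in a finite-dimensional complex Hilbert space H and let X be a self-adjoint linear operator on H. For ε ∈ ℝ set A(ε) = |φ⟩⟨φ| + εX, where |φ⟩⟨φ| denotes the rank-one orthogonal projection ψ ↦ ⟨φ, ψ⟩φ. Then lim_{ε→0} ‖A(ε)‖ = 1, and there exists ε_0 > 0 such that for all ε with 0 < |ε| < ε_0 the operator ‖A(ε)‖·I − εX is invertible and ⟨φ, (‖A(ε)‖·I − εX)^{−1} φ⟩ = 1. -/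
open Filter
open scoped InnerProductSpace Topology

-- an injective continuous linear endomorphism of a finite-dimensional space is a unit
lemma aux_isUnit {H : Type*} [NormedAddCommGroup H] [InnerProductSpace ℂ H]
    [FiniteDimensional ℂ H] (S : H →L[ℂ] H) (h : ∀ x : H, x ≠ 0 → S x ≠ 0) :
    IsUnit S := by
  rw [ContinuousLinearMap.isUnit_iff_bijective]
  have hinj : Function.Injective S := by
    have : LinearMap.ker (S : H →ₗ[ℂ] H) = ⊥ := by
      rw [LinearMap.ker_eq_bot']
      intro m hm
      by_contra hm0
      exact h m hm0 hm
    exact LinearMap.ker_eq_bot.mp this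
  exact ⟨hinj, LinearMap.injective_iff_surjective.mp hinj⟩

theorem stmt3 {H : Type*} [NormedAddCommGroup H] [InnerProductSpace ℂ H]
    [FiniteDimensional ℂ H]
    (φ : H) (hφ : ‖φ‖ = 1) (X : H →L[ℂ] H) (hX : IsSelfAdjoint X)
    (A : ℝ → (H →L[ℂ] H))
    (hA : ∀ ε : ℝ, A ε = (innerSL ℂ φ).smulRight φ + (ε : ℂ) • X) :
    Tendsto (fun ε : ℝ => ‖A ε‖) (𝓝 0) (𝓝 1) ∧
      ∃ ε₀ > (0 : ℝ), ∀ ε : ℝ, 0 < |ε| → |ε| < ε₀ →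
        IsUnit ((‖A ε‖ : ℂ) • (1 : H →L[ℂ] H) - (ε : ℂ) • X) ∧
          ⟪φ, (Ring.inverse ((‖A ε‖ : ℂ) • (1 : H →L[ℂ] H) - (ε : ℂ) • X)) φ⟫_ℂ = 1 := by
  set P : H →L[ℂ] H := (innerSL ℂ φ).smulRight φ with hP
  have hφ0 : φ ≠ 0 := by intro h; rw [h, norm_zero] at hφ; norm_num at hφ
  have hHnt : Nontrivial H := ⟨φ, 0, hφ0⟩
  have hPapp : ∀ x : H, P x = ⟪φ, x⟫_ℂ • φ := fun x => rfl
  have hself : ∀ x : H, (⟪x, x⟫_ℂ).re = ‖x‖ * ‖x‖ := fun x => by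
    simpa using inner_self_eq_norm_mul_norm (𝕜 := ℂ) x
  have hnormP : ‖P‖ = 1 := by
    rw [hP, ContinuousLinearMap.norm_smulRight_apply, innerSL_apply_norm, hφ, one_mul]
  -- part 1
  have hcont : Continuous fun ε : ℝ => ‖P + (ε : ℂ) • X‖ :=
    (continuous_const.add ((Complex.continuous_ofReal.smul continuous_const))).norm
  have h1 : Tendsto (fun ε : ℝ => ‖A ε‖) (𝓝 0) (𝓝 1) := by
    have := hcont.tendsto 0
    simp only [Complex.ofReal_zero, zero_smul, add_zero, hnormP] at this
    convert this using 2 with ε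
    rw [hA ε]
  refine ⟨h1, 1 / (3 * (‖X‖ + 1)), by positivity, fun ε hε1 hε2 => ?_⟩
  set c : ℝ := ‖A ε‖ with hc
  set δ : ℝ := |ε| * ‖X‖ with hδ
  have hXnn : (0:ℝ) ≤ ‖X‖ := norm_nonneg X
  have hδ3 : δ < 1 / 3 := by
    have ha : |ε| * ‖X‖ ≤ |ε| * (‖X‖ + 1) := by nlinarith [abs_nonneg ε]
    have h2 : |ε| * (‖X‖ + 1) < (1 / (3 * (‖X‖ + 1))) * (‖X‖ + 1) := by
      apply mul_lt_mul_of_pos_right hε2; positivity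
    have h3 : (1 / (3 * (‖X‖ + 1))) * (‖X‖ + 1) = 1 / 3 := by
      field_simp
    linarith
  have hnormεX : ‖(ε : ℂ) • X‖ = δ := by
    rw [norm_smul ((ε : ℂ)) X, Complex.norm_real, Real.norm_eq_abs]
  have hcge : 1 - δ ≤ c := by
    have : ‖P‖ ≤ ‖A ε‖ + ‖(ε : ℂ) • X‖ := by
      calc ‖P‖ = ‖A ε - (ε : ℂ) • X‖ := by rw [hA ε, add_sub_cancel_right]
        _ ≤ ‖A ε‖ + ‖(ε : ℂ) • X‖ := norm_sub_le _ _
    rw [hnormP, hnormεX] at this; linarith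
  have hcδ : δ < c := by linarith
  have hcpos : (0:ℝ) < c := by linarith [abs_nonneg ε, mul_nonneg (abs_nonneg ε) hXnn]
  -- bound on the perturbation inner products
  have hbound : ∀ x : H, ‖⟪x, ((ε : ℂ) • X) x⟫_ℂ‖ ≤ δ * (‖x‖ * ‖x‖) := by
    intro x
    calc ‖⟪x, ((ε : ℂ) • X) x⟫_ℂ‖ ≤ ‖x‖ * ‖((ε : ℂ) • X) x‖ := norm_inner_le_norm _ _
      _ ≤ ‖x‖ * (‖(ε : ℂ) • X‖ * ‖x‖) := by
          apply mul_le_mul_of_nonneg_left (ContinuousLinearMap.le_opNorm _ _) (norm_nonneg x)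
      _ = δ * (‖x‖ * ‖x‖) := by rw [hnormεX]; ring
  have hbound' : ∀ x : H, |(⟪x, ((ε:ℂ) • X) x⟫_ℂ).re| ≤ δ * (‖x‖ * ‖x‖) := fun x =>
    le_trans (Complex.abs_re_le_norm _) (hbound x)
  -- the candidate inverse operator is a unit
  set B : H →L[ℂ] H := (c : ℂ) • (1 : H →L[ℂ] H) - (ε : ℂ) • X with hB
  have hBinner : ∀ x : H, (⟪x, B x⟫_ℂ).re = c * (‖x‖ * ‖x‖) - (⟪x, ((ε:ℂ) • X) x⟫_ℂ).re := by
    intro x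
    simp only [hB, ContinuousLinearMap.sub_apply, ContinuousLinearMap.smul_apply,
      ContinuousLinearMap.one_apply, inner_sub_right, inner_smul_right, Complex.sub_re,
      Complex.re_ofReal_mul, hself x]
  have hBpos : ∀ x : H, x ≠ 0 → 0 < (⟪x, B x⟫_ℂ).re := by
    intro x hx
    have h1 := abs_le.mp (hbound' x)
    have hxpos : 0 < ‖x‖ * ‖x‖ := by
      have := norm_pos_iff.mpr hx; positivity
    rw [hBinner x]
    nlinarith
  have hBunit : IsUnit B := by
    apply aux_isUnit
    intro x hx h0
    have hp := hBpos x hx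
    rw [h0, inner_zero_right] at hp
    simp at hp
  refine ⟨hBunit, ?_⟩
  -- self-adjointness of A ε
  have hPsa : IsSelfAdjoint P := by
    rw [ContinuousLinearMap.isSelfAdjoint_iff_isSymmetric]
    intro x y
    simp only [ContinuousLinearMap.coe_coe, hPapp, inner_smul_left, inner_smul_right,
      inner_conj_symm]
    ring
  have hT : IsSelfAdjoint (A ε) := by
    rw [hA ε]
    exact hPsa.add (IsSelfAdjoint.smul (Complex.conj_ofReal ε) hX)
  -- computation of the quadratic form of A ε
  have hAinner : ∀ x : H, (⟪x, (A ε) x⟫_ℂ).re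
      = Complex.normSq ⟪φ, x⟫_ℂ + (⟪x, ((ε:ℂ) • X) x⟫_ℂ).re := by
    intro x
    have hsymm : ⟪x, φ⟫_ℂ = (starRingEnd ℂ) ⟪φ, x⟫_ℂ := (inner_conj_symm x φ).symm
    rw [hA ε]
    simp only [ContinuousLinearMap.add_apply, inner_add_right, hPapp, inner_smul_right,
      Complex.add_re]
    congr 1
    rw [hsymm, Complex.mul_conj, Complex.ofReal_re]
  -- spectral radius is attained
  obtain ⟨z, hz, hznorm⟩ := spectrum.exists_nnnorm_eq_spectralRadius (A ε)
  rw [hT.spectralRadius_eq_nnnorm] at hznorm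
  have hzre : z = ((z.re : ℝ) : ℂ) := hT.mem_spectrum_eq_re hz
  have hzabs : |z.re| = c := by
    have h0 : ‖z‖₊ = ‖A ε‖₊ := by exact_mod_cast hznorm
    have h2 : ‖z‖ = c := by rw [hc, ← coe_nnnorm z, ← coe_nnnorm (A ε), h0]
    rw [hzre] at h2
    rwa [Complex.norm_real, Real.norm_eq_abs] at h2
  -- rule out z.re = -c
  have hzc : z.re = c := by
    rcases (abs_eq (le_of_lt hcpos)).mp hzabs with h | h
    · exact h
    · exfalso
      rw [spectrum.mem_iff] at hz
      apply hz
      rw [hzre, h, Algebra.algebraMap_eq_smul_one]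
      have hun : IsUnit ((c : ℂ) • (1 : H →L[ℂ] H) + A ε) := by
        apply aux_isUnit
        intro x hx h0
        have hpos : 0 < (⟪x, ((c : ℂ) • (1 : H →L[ℂ] H) + A ε) x⟫_ℂ).re := by
          have h1 := abs_le.mp (hbound' x)
          have hxpos : 0 < ‖x‖ * ‖x‖ := by have := norm_pos_iff.mpr hx; positivity
          have h4 : 0 ≤ Complex.normSq ⟪φ, x⟫_ℂ := Complex.normSq_nonneg _
          have hre : (⟪x, ((ε:ℂ) • X) x⟫_ℂ).re = ε * (⟪x, X x⟫_ℂ).re := by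
            rw [ContinuousLinearMap.smul_apply, inner_smul_right, Complex.re_ofReal_mul]
          simp only [ContinuousLinearMap.add_apply, ContinuousLinearMap.smul_apply,
            ContinuousLinearMap.one_apply, inner_add_right, inner_smul_right, Complex.add_re,
            Complex.re_ofReal_mul, hself x, hAinner x]
          nlinarith [h1.1, h1.2, hre, mul_pos (sub_pos.mpr hcδ) hxpos]
        rw [h0, inner_zero_right] at hpos
        simp at hpos
      have heq : ((-c : ℝ) : ℂ) • (1 : H →L[ℂ] H) - A ε = -(((c : ℝ) : ℂ) • 1 + A ε) := by
        push_cast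
        module
      rw [heq]
      exact hun.neg
  -- obtain an eigenvector for c
  have hker : ∃ v : H, v ≠ 0 ∧ (A ε) v = (c : ℂ) • v := by
    rw [spectrum.mem_iff, hzre, hzc, Algebra.algebraMap_eq_smul_one] at hz
    by_contra hcon
    push_neg at hcon
    apply hz
    apply aux_isUnit
    intro x hx h0
    apply hcon x hx
    have h1 : (c : ℂ) • x - (A ε) x = 0 := by
      simpa [ContinuousLinearMap.sub_apply] using h0
    exact (sub_eq_zero.mp h1).symm
  obtain ⟨v, hv0, hveq⟩ := hker
  -- φ is not orthogonal to v
  have hφv : ⟪φ, v⟫_ℂ ≠ 0 := by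
    have h3 := hAinner v
    have h5 : (⟪v, (A ε) v⟫_ℂ).re = c * (‖v‖ * ‖v‖) := by
      rw [hveq, inner_smul_right, Complex.re_ofReal_mul, hself v]
    have h1 := abs_le.mp (hbound' v)
    have hvpos : 0 < ‖v‖ * ‖v‖ := by have := norm_pos_iff.mpr hv0; positivity
    have hns : 0 < Complex.normSq ⟪φ, v⟫_ℂ := by nlinarith
    intro hzero
    rw [hzero] at hns
    simp at hns
  -- the final computation
  set u : H := (Ring.inverse B) φ with hu
  have hBu : B u = φ := by
    have h := Ring.mul_inverse_cancel B hBunit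
    have h2 := congrArg (fun T : H →L[ℂ] H => T φ) h
    simpa only [ContinuousLinearMap.mul_apply, ContinuousLinearMap.one_apply] using h2
  have hεXu : ((ε : ℂ) • X) u = (c : ℂ) • u - φ := by
    have hk : (c : ℂ) • u - ((ε : ℂ) • X) u = φ := by
      rw [← hBu, hB]
      simp only [ContinuousLinearMap.sub_apply, ContinuousLinearMap.smul_apply,
        ContinuousLinearMap.one_apply]
    linear_combination (norm := module) -hk
  have hTu : (c : ℂ) • u - (A ε) u = (1 - ⟪φ, u⟫_ℂ) • φ := by
    rw [hA ε]
    simp only [ContinuousLinearMap.add_apply, hPapp, hεXu]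
    module
  have hvz : ⟪v, (c : ℂ) • u - (A ε) u⟫_ℂ = 0 := by
    have hsym := ContinuousLinearMap.isSelfAdjoint_iff_isSymmetric.mp hT
    have hswap : ⟪v, (A ε) u⟫_ℂ = ⟪(A ε) v, u⟫_ℂ := (hsym v u).symm
    rw [inner_sub_right, inner_smul_right, hswap, hveq, inner_smul_left, Complex.conj_ofReal]
    ring
  have hfin : (1 - ⟪φ, u⟫_ℂ) * ⟪v, φ⟫_ℂ = 0 := by
    rw [← inner_smul_right, ← hTu, hvz]
  have hvφ : ⟪v, φ⟫_ℂ ≠ 0 := fun h => hφv (inner_eq_zero_symm.mp h)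
  have hone : (1 : ℂ) - ⟪φ, u⟫_ℂ = 0 := by
    rcases mul_eq_zero.mp hfin with h | h
    · exact h
    · exact absurd h hvφ
  linear_combination -hone
end

section
/- Let φ be a unit vector in a finite-dimensional complex Hilbert space H and let X be a self-adjoint linear operator on H, and write Φ(·) = ⟨φ, · φ⟩, m_n = Φ(X^n). Then the norm of A(ε) = |φ⟩⟨φ| + εX satisfies the second-order expansion ‖A(ε)‖ = 1 + ε·m_1 + ε²·(m_2 − m_1²) + o(ε²) as ε → 0. -/
/-!
Write `A ε = P + ε X` with `P = |φ⟩⟨φ|` and let `w = X φ - m₁ φ` be the component of `X φ`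
orthogonal to `φ`, so that `‖w‖² = m₂ - m₁²`. Since `A ε` is symmetric, `‖A ε‖` is the supremum
of `|⟪A ε x, x⟫| / ‖x‖²`. The trial vector `φ + ε w` gives
`‖A ε‖ ≥ 1 + ε m₁ + ε² ‖w‖² + O(ε³)`. Conversely, splitting `x = u φ + v` with `v ⊥ φ`, the form
`⟪A ε x, x⟫` is dominated by the quadratic form of the `2 × 2` matrix
`[[1 + ε m₁, |ε| ‖w‖], [|ε| ‖w‖, |ε| ‖X‖]]` in `(|u|, ‖v‖)`, whose largest eigenvalue is at most
the Schur-complement bound `1 + ε m₁ + ε² ‖w‖² / (1 + ε m₁ - |ε| ‖X‖) = 1 + ε m₁ + ε² ‖w‖² + O(ε³)`.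
-/

open Filter Asymptotics
open scoped InnerProductSpace Topology

theorem Asymptotics.IsLittleO.of_eventually_le_of_le {α : Type*} {l : Filter α}
    {f lo hi g : α → ℝ} (hlo : lo =o[l] g) (hhi : hi =o[l] g)
    (h_lo : ∀ᶠ x in l, lo x ≤ f x) (h_hi : ∀ᶠ x in l, f x ≤ hi x) : f =o[l] g := by
  refine IsBigO.trans_isLittleO (g := fun x => ‖lo x‖ + ‖hi x‖) ?_
    (hlo.norm_left.add hhi.norm_left)
  refine .of_bound 1 ?_
  filter_upwards [h_lo, h_hi] with x h₁ h₂
  simp only [Real.norm_eq_abs, one_mul]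
  rw [abs_of_nonneg (by positivity : 0 ≤ |lo x| + |hi x|)]
  exact abs_le.2 ⟨by linarith [neg_abs_le (lo x), abs_nonneg (hi x)],
    by linarith [le_abs_self (hi x), abs_nonneg (lo x)]⟩

theorem sq_mul_isLittleO_sq {g : ℝ → ℝ} (hg : Tendsto g (𝓝 0) (𝓝 0)) :
    (fun ε : ℝ => ε ^ 2 * g ε) =o[𝓝 0] (fun ε => ε ^ 2) := by
  simpa using (isBigO_refl (fun ε : ℝ => ε ^ 2) _).mul_isLittleO (isLittleO_one_iff ℝ |>.2 hg)

theorem eventually_abs_mul_lt_one_add_mul (m t : ℝ) : ∀ᶠ ε : ℝ in 𝓝 0, |ε| * t < 1 + ε * m := by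
  have hc : Continuous fun ε : ℝ => 1 + ε * m - |ε| * t := by fun_prop
  have : Tendsto (fun ε : ℝ => 1 + ε * m - |ε| * t) (𝓝 0) (𝓝 1) := by simpa using hc.tendsto 0
  filter_upwards [this.eventually_const_lt one_pos] with ε hε
  linarith

theorem trial_quotient_sub_isLittleO (m σ r : ℝ) :
    (fun ε : ℝ => (1 + ε * m + 2 * ε ^ 2 * σ ^ 2 + ε ^ 3 * r) / (1 + ε ^ 2 * σ ^ 2)
      - (1 + ε * m + ε ^ 2 * σ ^ 2)) =o[𝓝 0] (fun ε => ε ^ 2) := by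
  have hg : ContinuousAt
      (fun ε : ℝ => ε * (r - m * σ ^ 2 - ε * σ ^ 4) / (1 + ε ^ 2 * σ ^ 2)) 0 := by
    fun_prop (disch := positivity)
  refine (sq_mul_isLittleO_sq (by simpa using hg.tendsto)).congr_left fun ε => ?_
  have : 0 < 1 + ε ^ 2 * σ ^ 2 := by positivity
  field_simp
  ring

theorem schur_bound_sub_isLittleO (m σ t : ℝ) :
    (fun ε : ℝ => 1 + ε * m + (|ε| * σ) ^ 2 / (1 + ε * m - |ε| * t)
      - (1 + ε * m + ε ^ 2 * σ ^ 2)) =o[𝓝 0] (fun ε => ε ^ 2) := by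
  have hg : ContinuousAt
      (fun ε : ℝ => σ ^ 2 * (|ε| * t - ε * m) / (1 + ε * m - |ε| * t)) 0 := by
    fun_prop (disch := norm_num)
  refine (sq_mul_isLittleO_sq (by simpa using hg.tendsto)).congr' ?_ EventuallyEq.rfl
  filter_upwards [eventually_abs_mul_lt_one_add_mul m t] with ε hε
  have : 0 < 1 + ε * m - |ε| * t := by linarith
  rw [mul_pow, sq_abs]
  field_simp
  ring

theorem mul_sq_add_two_mul_mul_add_mul_sq_le {a c t α β : ℝ} (hta : t < a) :
    a * α ^ 2 + 2 * c * α * β + t * β ^ 2 ≤ (a + c ^ 2 / (a - t)) * (α ^ 2 + β ^ 2) := by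
  have hk : 0 < a - t := sub_pos.2 hta
  have key : 0 ≤ (c * α - (a - t) * β) ^ 2 / (a - t) + c ^ 2 / (a - t) * β ^ 2 := by positivity
  have expand : (a + c ^ 2 / (a - t)) * (α ^ 2 + β ^ 2) - (a * α ^ 2 + 2 * c * α * β + t * β ^ 2)
      = (c * α - (a - t) * β) ^ 2 / (a - t) + c ^ 2 / (a - t) * β ^ 2 := by
    field_simp
    ring
  linarith

section

variable {𝕜 E : Type*} [RCLike 𝕜] [NormedAddCommGroup E] [InnerProductSpace 𝕜 E]

open RCLike InnerProductSpace ComplexConjugate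

theorem ContinuousLinearMap.opNorm_le_of_abs_re_inner_self_le {T : E →L[𝕜] E}
    (hT : (T : E →ₗ[𝕜] E).IsSymmetric) {c : ℝ} (hc : 0 ≤ c)
    (h : ∀ x, |re ⟪T x, x⟫_𝕜| ≤ c * ‖x‖ ^ 2) : ‖T‖ ≤ c := by
  rw [T.norm_eq_iSup_rayleighQuotient hT]
  refine ciSup_le fun x => ?_
  rw [rayleighQuotient, reApplyInnerSelf_apply, abs_div, abs_sq]
  exact div_le_of_le_mul₀ (by positivity) hc (h x)

theorem ContinuousLinearMap.abs_re_inner_apply_self_le (T : E →L[𝕜] E) (x : E) :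
    |re ⟪T x, x⟫_𝕜| ≤ ‖T‖ * ‖x‖ ^ 2 :=
  calc |re ⟪T x, x⟫_𝕜| ≤ ‖T x‖ * ‖x‖ := (abs_re_le_norm _).trans (norm_inner_le_norm _ _)
    _ ≤ ‖T‖ * ‖x‖ * ‖x‖ := by gcongr; exact T.le_opNorm x
    _ = ‖T‖ * ‖x‖ ^ 2 := by ring

theorem LinearMap.IsSymmetric.re_inner_map_add_add {T : E →ₗ[𝕜] E} (hT : T.IsSymmetric)
    (x y : E) :
    re ⟪T (x + y), x + y⟫_𝕜 = re ⟪T x, x⟫_𝕜 + 2 * re ⟪T x, y⟫_𝕜 + re ⟪T y, y⟫_𝕜 := by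
  have : re ⟪T y, x⟫_𝕜 = re ⟪T x, y⟫_𝕜 := by rw [hT, inner_re_symm]
  simp only [map_add, inner_add_left, inner_add_right, this]
  ring

namespace RankOnePerturbation

variable (𝕜) in
/-- The component of `y` orthogonal to `φ`, provided `‖φ‖ = 1`. -/
noncomputable def orthComponent (φ y : E) : E := y - ⟪φ, y⟫_𝕜 • φ

variable {φ : E} {X : E →L[𝕜] E}

theorem smul_add_orthComponent (y : E) : ⟪φ, y⟫_𝕜 • φ + orthComponent 𝕜 φ y = y := by
  rw [orthComponent, add_sub_cancel]

theorem inner_orthComponent (hφ : ‖φ‖ = 1) (y : E) : ⟪φ, orthComponent 𝕜 φ y⟫_𝕜 = 0 := by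
  rw [orthComponent, inner_sub_right, inner_smul_right, inner_self_eq_norm_sq_to_K, hφ]
  simp

variable (𝕜) in
theorem norm_sq_eq_add_norm_orthComponent_sq (hφ : ‖φ‖ = 1) (y : E) :
    ‖y‖ ^ 2 = ‖⟪φ, y⟫_𝕜‖ ^ 2 + ‖orthComponent 𝕜 φ y‖ ^ 2 := by
  have h := norm_add_sq_eq_norm_sq_add_norm_sq_of_inner_eq_zero (𝕜 := 𝕜) (⟪φ, y⟫_𝕜 • φ)
    (orthComponent 𝕜 φ y) (by rw [inner_smul_left, inner_orthComponent hφ, mul_zero])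
  rw [smul_add_orthComponent, norm_smul, hφ, mul_one] at h
  simpa only [sq] using h

theorem inner_apply_eq_inner_orthComponent {v : E} (hv : ⟪φ, v⟫_𝕜 = 0) :
    ⟪X φ, v⟫_𝕜 = ⟪orthComponent 𝕜 φ (X φ), v⟫_𝕜 := by
  conv_lhs => rw [← smul_add_orthComponent (𝕜 := 𝕜) (φ := φ) (X φ)]
  rw [inner_add_left, inner_smul_left, hv, mul_zero, zero_add]

theorem norm_orthComponent_apply_sq (hφ : ‖φ‖ = 1) (hX : (X : E →ₗ[𝕜] E).IsSymmetric) :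
    ‖orthComponent 𝕜 φ (X φ)‖ ^ 2 = re ⟪φ, X (X φ)⟫_𝕜 - re ⟪φ, X φ⟫_𝕜 ^ 2 := by
  have h := norm_sq_eq_add_norm_orthComponent_sq 𝕜 hφ (X φ)
  have hm : (re ⟪φ, X φ⟫_𝕜 : 𝕜) = ⟪φ, X φ⟫_𝕜 := hX.coe_re_inner_self_apply φ
  have hXX : ⟪X φ, X φ⟫_𝕜 = ⟪φ, X (X φ)⟫_𝕜 := hX φ (X φ)
  rw [← hm, ← inner_self_eq_norm_sq (𝕜 := 𝕜), hXX, norm_ofReal, sq_abs] at h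
  linarith

theorem le_norm_rankOne_add_smul (hφ : ‖φ‖ = 1) (hX : (X : E →ₗ[𝕜] E).IsSymmetric) (ε : ℝ) :
    (1 + ε * re ⟪φ, X φ⟫_𝕜 + 2 * ε ^ 2 * ‖orthComponent 𝕜 φ (X φ)‖ ^ 2
        + ε ^ 3 * re ⟪X (orthComponent 𝕜 φ (X φ)), orthComponent 𝕜 φ (X φ)⟫_𝕜)
      / (1 + ε ^ 2 * ‖orthComponent 𝕜 φ (X φ)‖ ^ 2) ≤ ‖rankOne 𝕜 φ φ + (ε : 𝕜) • X‖ := by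
  set w := orthComponent 𝕜 φ (X φ)
  set ψ := φ + (ε : 𝕜) • w
  have hφw : ⟪φ, (ε : 𝕜) • w⟫_𝕜 = 0 := by rw [inner_smul_right, inner_orthComponent hφ, mul_zero]
  have hφψ : ⟪φ, ψ⟫_𝕜 = 1 := by
    rw [inner_add_right, hφw, inner_self_eq_norm_sq_to_K, hφ]
    simp
  have hψ : ‖ψ‖ ^ 2 = 1 + ε ^ 2 * ‖w‖ ^ 2 := by
    have := norm_add_sq_eq_norm_sq_add_norm_sq_of_inner_eq_zero (𝕜 := 𝕜) φ _ hφw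
    rw [norm_smul, norm_ofReal, hφ] at this
    rw [sq, this, ← sq_abs ε]
    ring
  have hXφw : re ⟪X φ, (ε : 𝕜) • w⟫_𝕜 = ε * ‖w‖ ^ 2 := by
    rw [inner_apply_eq_inner_orthComponent hφw, inner_smul_right, re_ofReal_mul,
      inner_self_eq_norm_sq]
  have hXψ : re ⟪X ψ, ψ⟫_𝕜 = re ⟪φ, X φ⟫_𝕜 + 2 * ε * ‖w‖ ^ 2 + ε ^ 2 * re ⟪X w, w⟫_𝕜 := by
    have h := hX.re_inner_map_add_add φ ((ε : 𝕜) • w)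
    simp only [ContinuousLinearMap.coe_coe] at h
    rw [h, hXφw, inner_re_symm (X φ),
      map_smul, inner_smul_left, inner_smul_right, conj_ofReal, re_ofReal_mul, re_ofReal_mul]
    ring
  have hAψ : re ⟪(rankOne 𝕜 φ φ + (ε : 𝕜) • X) ψ, ψ⟫_𝕜 = 1 + ε * re ⟪φ, X φ⟫_𝕜
      + 2 * ε ^ 2 * ‖w‖ ^ 2 + ε ^ 3 * re ⟪X w, w⟫_𝕜 := by
    rw [add_apply, smul_apply, rankOne_apply, hφψ, one_smul, inner_add_left, inner_smul_left,
      conj_ofReal, map_add, re_ofReal_mul, hXψ, hφψ, one_re]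
    ring
  calc _ = (rankOne 𝕜 φ φ + (ε : 𝕜) • X).rayleighQuotient ψ := by
        rw [ContinuousLinearMap.rayleighQuotient, ContinuousLinearMap.reApplyInnerSelf_apply,
          hAψ, hψ]
    _ ≤ _ := (le_abs_self _).trans (ContinuousLinearMap.rayleighQuotient_le_norm _ ψ)

theorem re_inner_rankOne_add_smul_apply (ε : ℝ) (x : E) :
    re ⟪(rankOne 𝕜 φ φ + (ε : 𝕜) • X) x, x⟫_𝕜 = ‖⟪φ, x⟫_𝕜‖ ^ 2 + ε * re ⟪X x, x⟫_𝕜 := by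
  rw [add_apply, smul_apply, rankOne_apply, inner_add_left, inner_smul_left, inner_smul_left,
    conj_ofReal, map_add, re_ofReal_mul, RCLike.conj_mul, ← ofReal_pow, ofReal_re]

theorem re_inner_apply_self_eq (hφ : ‖φ‖ = 1) (hX : (X : E →ₗ[𝕜] E).IsSymmetric) (x : E) :
    re ⟪X x, x⟫_𝕜 = re ⟪φ, X φ⟫_𝕜 * ‖⟪φ, x⟫_𝕜‖ ^ 2
      + 2 * re (conj ⟪φ, x⟫_𝕜 * ⟪orthComponent 𝕜 φ (X φ), orthComponent 𝕜 φ x⟫_𝕜)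
      + re ⟪X (orthComponent 𝕜 φ x), orthComponent 𝕜 φ x⟫_𝕜 := by
  have h := hX.re_inner_map_add_add (⟪φ, x⟫_𝕜 • φ) (orthComponent 𝕜 φ x)
  simp only [ContinuousLinearMap.coe_coe, smul_add_orthComponent] at h
  rw [h, map_smul, inner_smul_left, inner_smul_left, inner_smul_right, ← mul_assoc,
    RCLike.conj_mul, ← ofReal_pow, re_ofReal_mul, inner_re_symm (X φ),
    inner_apply_eq_inner_orthComponent (inner_orthComponent hφ x)]
  ring

theorem norm_rankOne_add_smul_le (hφ : ‖φ‖ = 1) (hX : (X : E →ₗ[𝕜] E).IsSymmetric) {ε : ℝ}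
    (hε : |ε| * ‖X‖ < 1 + ε * re ⟪φ, X φ⟫_𝕜) :
    ‖rankOne 𝕜 φ φ + (ε : 𝕜) • X‖ ≤ 1 + ε * re ⟪φ, X φ⟫_𝕜
      + (|ε| * ‖orthComponent 𝕜 φ (X φ)‖) ^ 2 / (1 + ε * re ⟪φ, X φ⟫_𝕜 - |ε| * ‖X‖) := by
  set a := 1 + ε * re ⟪φ, X φ⟫_𝕜
  set w := orthComponent 𝕜 φ (X φ)
  have hsymm : ((rankOne 𝕜 φ φ + (ε : 𝕜) • X : E →L[𝕜] E) : E →ₗ[𝕜] E).IsSymmetric := by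
    rw [ContinuousLinearMap.toLinearMap_add, ContinuousLinearMap.toLinearMap_smul]
    exact (isSymmetric_rankOne_self φ).add (hX.smul (conj_ofReal ε))
  have hc : 0 ≤ (|ε| * ‖w‖) ^ 2 / (a - |ε| * ‖X‖) := div_nonneg (sq_nonneg _) (by linarith)
  refine ContinuousLinearMap.opNorm_le_of_abs_re_inner_self_le hsymm
    (by linarith [mul_nonneg (abs_nonneg ε) (norm_nonneg X)]) fun x => abs_le.2 ⟨?_, ?_⟩
  · have hX_le : |ε * re ⟪X x, x⟫_𝕜| ≤ |ε| * ‖X‖ * ‖x‖ ^ 2 := by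
      rw [abs_mul, mul_assoc]
      gcongr
      exact X.abs_re_inner_apply_self_le x
    have hbound : |ε| * ‖X‖ * ‖x‖ ^ 2 ≤ (a + (|ε| * ‖w‖) ^ 2 / (a - |ε| * ‖X‖)) * ‖x‖ ^ 2 := by
      gcongr
      linarith
    rw [re_inner_rankOne_add_smul_apply]
    linarith [sq_nonneg ‖⟪φ, x⟫_𝕜‖, (abs_le.1 hX_le).1]
  · set u := ⟪φ, x⟫_𝕜
    set v := orthComponent 𝕜 φ x
    have hcross : ε * re (conj u * ⟪w, v⟫_𝕜) ≤ |ε| * ‖w‖ * ‖u‖ * ‖v‖ :=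
      calc ε * re (conj u * ⟪w, v⟫_𝕜) ≤ |ε| * ‖conj u * ⟪w, v⟫_𝕜‖ :=
            (le_abs_self _).trans (by rw [abs_mul]; gcongr; exact abs_re_le_norm _)
        _ ≤ |ε| * (‖u‖ * (‖w‖ * ‖v‖)) := by
            rw [norm_mul, RCLike.norm_conj]
            gcongr
            exact norm_inner_le_norm w v
        _ = |ε| * ‖w‖ * ‖u‖ * ‖v‖ := by ring
    have hdiag : ε * re ⟪X v, v⟫_𝕜 ≤ |ε| * ‖X‖ * ‖v‖ ^ 2 := by
      rw [mul_assoc]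
      exact (le_abs_self _).trans (by rw [abs_mul]; gcongr; exact X.abs_re_inner_apply_self_le v)
    calc re ⟪(rankOne 𝕜 φ φ + (ε : 𝕜) • X) x, x⟫_𝕜
        = a * ‖u‖ ^ 2 + 2 * (ε * re (conj u * ⟪w, v⟫_𝕜)) + ε * re ⟪X v, v⟫_𝕜 := by
          rw [re_inner_rankOne_add_smul_apply, re_inner_apply_self_eq hφ hX]
          ring
      _ ≤ a * ‖u‖ ^ 2 + 2 * (|ε| * ‖w‖) * ‖u‖ * ‖v‖ + |ε| * ‖X‖ * ‖v‖ ^ 2 := by linarith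
      _ ≤ (a + (|ε| * ‖w‖) ^ 2 / (a - |ε| * ‖X‖)) * (‖u‖ ^ 2 + ‖v‖ ^ 2) :=
          mul_sq_add_two_mul_mul_add_mul_sq_le hε
      _ = _ := by rw [norm_sq_eq_add_norm_orthComponent_sq 𝕜 hφ x]

theorem norm_rankOne_add_smul_isLittleO (hφ : ‖φ‖ = 1) (hX : (X : E →ₗ[𝕜] E).IsSymmetric) :
    (fun ε : ℝ => ‖rankOne 𝕜 φ φ + (ε : 𝕜) • X‖
        - (1 + ε * re ⟪φ, X φ⟫_𝕜 + ε ^ 2 * ‖orthComponent 𝕜 φ (X φ)‖ ^ 2))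
      =o[𝓝 0] (fun ε => ε ^ 2) :=
  (trial_quotient_sub_isLittleO _ _ _).of_eventually_le_of_le (schur_bound_sub_isLittleO _ _ _)
    (.of_forall fun ε => sub_le_sub_right (le_norm_rankOne_add_smul hφ hX ε) _)
    ((eventually_abs_mul_lt_one_add_mul _ _).mono fun _ hε =>
      sub_le_sub_right (norm_rankOne_add_smul_le hφ hX hε) _)

end RankOnePerturbation

end

theorem stmt4 {H : Type*} [NormedAddCommGroup H] [InnerProductSpace ℂ H]
    [FiniteDimensional ℂ H]
    (φ : H) (hφ : ‖φ‖ = 1) (X : H →L[ℂ] H) (hX : IsSelfAdjoint X)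
    (A : ℝ → (H →L[ℂ] H))
    (hA : ∀ ε : ℝ, A ε = (innerSL ℂ φ).smulRight φ + (ε : ℂ) • X)
    (m₁ m₂ : ℝ)
    (hm₁ : m₁ = (⟪φ, X φ⟫_ℂ).re) (hm₂ : m₂ = (⟪φ, X (X φ)⟫_ℂ).re) :
    (fun ε : ℝ => ‖A ε‖ - (1 + ε * m₁ + ε ^ 2 * (m₂ - m₁ ^ 2)))
      =o[𝓝 0] (fun ε : ℝ => ε ^ 2) := by
  have hXs : (X : H →ₗ[ℂ] H).IsSymmetric := hX.isSymmetric
  obtain rfl : A = fun ε : ℝ => InnerProductSpace.rankOne ℂ φ φ + (ε : ℂ) • X := funext hA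
  subst hm₁ hm₂
  have h := RankOnePerturbation.norm_rankOne_add_smul_isLittleO hφ hXs
  rw [RankOnePerturbation.norm_orthComponent_apply_sq hφ hXs] at h
  exact h
end

section
/- There exist absolute constants T > 0 and c > 0 such that for every N ≥ 1, if X_1, …, X_N are independent random variables each exponentially distributed with mean 1, X = (X_1, …, X_N), S = ∑_{i=1}^N X_i, and t > T/√N, then P( ‖X‖/S > t ) ≤ e^{−ctN}. -/
/-!
Put `u = t N`. Almost surely every `Xᵢ ≥ 0`, so `‖X‖ ≤ S` and the event is empty once `t ≥ 1`.
For `t < 1`, `‖X‖ > t S` forces `S ≤ N / 2` or `‖X‖² > u² / 4`. The squares `Xᵢ²` have no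
exponential moment, so they are split at level `b = √u / 4`:
`∑ Xᵢ² ≤ ∑_{Xᵢ ≤ b} Xᵢ² + (∑_{Xᵢ > b} Xᵢ)²`, and one of the two parts exceeds `u² / 8`
resp. `u / 3`. Each of the three events has a Chernoff bound: `-Xᵢ` at parameter `1`, the
truncated square at `16 / u` (where `16 b² / u = 1` keeps the exponent bounded), and the upper
part at `1 / 2` (with moment generating function `1 + O(e^{-b/4})`). Once `u² ≥ 40000 N`,
i.e. `t > 200 / √N`, each bound is at most `e^{-u/12}`.
-/

open MeasureTheory ProbabilityTheory Real Set

lemma one_add_pow_le_exp_mul {a : ℝ} (ha : 0 ≤ a) (n : ℕ) : (1 + a) ^ n ≤ exp (n * a) := by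
  rw [exp_nat_mul]
  gcongr
  linarith [add_one_le_exp a]

lemma exp_neg_le_two_div_sq {y : ℝ} (hy : 0 < y) : exp (-y) ≤ 2 / y ^ 2 := by
  rw [exp_neg, inv_le_comm₀ (exp_pos y) (by positivity), inv_div]
  linarith [quadratic_le_exp_of_nonneg hy.le]

lemma exp_half_mul_half_pow_le (n : ℕ) : exp (n / 2) * (1 / 2) ^ n ≤ exp (-(n / 12)) := by
  rw [← exp_log (by norm_num : (0 : ℝ) < 1 / 2), ← exp_nat_mul, ← exp_add, exp_le_exp,
    one_div, log_inv]
  nlinarith [log_two_gt_d9, (Nat.cast_nonneg n : (0 : ℝ) ≤ n)]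

lemma three_mul_exp_neg_le {u : ℝ} (hu : 48 ≤ u) : 3 * exp (-(u / 12)) ≤ exp (-(u / 24)) := by
  have h3 : 3 ≤ exp (u / 24) := by linarith [add_one_le_exp (u / 24)]
  have hprod : exp (-(u / 24)) * exp (u / 24) = 1 := by rw [← exp_add]; simp
  rw [show -(u / 12) = -(u / 24) + -(u / 24) by ring, exp_add]
  nlinarith [exp_pos (-(u / 24))]

lemma lt_mul_and_mul_le_mul_sq_of_div_sqrt_lt {n t : ℝ} (hn : 1 ≤ n) (ht : 200 / √n < t) :
    200 < t * n ∧ 40000 * n ≤ (t * n) ^ 2 := by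
  have hsqrt : 1 ≤ √n := one_le_sqrt.2 hn
  have htn : 200 < t * √n := (div_lt_iff₀ (by positivity)).1 ht
  have hn_eq : t * n = t * √n * √n := by rw [mul_assoc, mul_self_sqrt (by positivity)]
  constructor
  · rw [hn_eq]; nlinarith
  · rw [hn_eq, mul_pow, sq_sqrt (by positivity)]
    have : 40000 ≤ (t * √n) ^ 2 := by nlinarith
    nlinarith

instance isProbabilityMeasure_expMeasure_one : IsProbabilityMeasure (expMeasure 1) :=
  isProbabilityMeasure_expMeasure one_pos

lemma integral_expMeasure_one (g : ℝ → ℝ) :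
    ∫ x, g x ∂expMeasure 1 = ∫ x in Ioi 0, exp (-x) * g x := by
  rw [expMeasure, gammaMeasure, integral_withDensity_eq_integral_toReal_smul
    (f := gammaPDF 1 1) (measurable_gammaPDFReal 1 1).ennreal_ofReal
    (ae_of_all _ fun _ => ENNReal.ofReal_lt_top),
    ← integral_Ici_eq_integral_Ioi, ← integral_indicator measurableSet_Ici]
  congr 1 with x
  by_cases hx : 0 ≤ x <;> simp [gammaPDF, gammaPDFReal, hx, (exp_pos _).le]

lemma mgf_id_expMeasure_one {c : ℝ} (hc : c < 1) : mgf id (expMeasure 1) c = (1 - c)⁻¹ := by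
  have key := integral_rpow_mul_exp_neg_mul_Ioi one_pos (sub_pos.2 hc)
  simp only [sub_self, rpow_zero, one_mul, Gamma_one, one_div, rpow_one, mul_one] at key
  rw [mgf, integral_expMeasure_one, ← key]
  congr 1 with x
  rw [id, ← exp_add]; ring_nf

lemma integrable_exp_mul_expMeasure_one {c : ℝ} (hc : c < 1) :
    Integrable (fun x => exp (c * x)) (expMeasure 1) :=
  mgf_pos_iff.1 (show 0 < mgf id _ c by rw [mgf_id_expMeasure_one hc]; simpa using hc)

lemma integral_sq_expMeasure_one : ∫ x, x ^ 2 ∂expMeasure 1 = 2 := by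
  have key := integral_rpow_mul_exp_neg_mul_Ioi (a := 3) (by norm_num) one_pos
  rw [show (3 : ℝ) = (2 : ℕ) + 1 by norm_num, Gamma_nat_eq_factorial] at key
  rw [integral_expMeasure_one]
  convert key using 1
  · refine setIntegral_congr_fun measurableSet_Ioi fun x _ => ?_
    simp [mul_comm]
  · norm_num [Nat.factorial]

lemma integrable_sq_expMeasure_one : Integrable (fun x : ℝ => x ^ 2) (expMeasure 1) :=
  .of_integral_ne_zero (by rw [integral_sq_expMeasure_one]; norm_num)

lemma ae_nonneg_expMeasure_one : ∀ᵐ x ∂expMeasure 1, 0 ≤ x := by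
  rw [ae_iff]
  simp only [not_le]
  change expMeasure 1 (Iio 0) = 0
  rw [expMeasure, gammaMeasure, withDensity_apply _ measurableSet_Iio]
  exact lintegral_gammaPDF_of_nonpos le_rfl

lemma measure_sum_comp_ge_le_exp_mul_mgf_pow {ι Ω : Type*} [Fintype ι] [MeasurableSpace Ω]
    {P : Measure Ω} {μ : Measure ℝ} {X : ι → Ω → ℝ} (hX : ∀ i, Measurable (X i))
    (hind : iIndepFun X P) (hmap : ∀ i, P.map (X i) = μ) {f : ℝ → ℝ} (hf : Measurable f)
    {l : ℝ} (hl : 0 ≤ l)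
    (hint : Integrable (fun x => exp (l * f x)) μ) (r : ℝ) :
    P {ω | r ≤ ∑ i, f (X i ω)} ≤
      ENNReal.ofReal (exp (-l * r) * mgf f μ l ^ Fintype.card ι) := by
  have := hind.isProbabilityMeasure
  have hmeas : AEStronglyMeasurable (fun x => exp (l * f x)) μ := hint.aestronglyMeasurable
  have hmgf (i : ι) : mgf (f ∘ X i) P l = mgf f μ l := by
    rw [← mgf_map (hX i).aemeasurable (hmap i ▸ hmeas), hmap i]
  have hint_comp (i : ι) : Integrable (fun ω => exp (l * (f ∘ X i) ω)) P :=
    (integrable_map_measure (g := fun x => exp (l * f x)) (hmap i ▸ hmeas)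
      (hX i).aemeasurable).1 (by rwa [hmap i])
  have hind_comp : iIndepFun (fun i => f ∘ X i) P := hind.comp (fun _ => f) fun _ => hf
  have hsum := hind_comp.integrable_exp_mul_sum (fun i => hf.comp (hX i))
    (s := Finset.univ) fun i _ => hint_comp i
  have key := measure_ge_le_exp_mul_mgf r hl hsum
  rw [hind_comp.mgf_sum (fun i => hf.comp (hX i)), Finset.prod_congr rfl fun i _ => hmgf i,
    Finset.prod_const, Finset.card_univ] at key
  rw [← ofReal_measureReal]
  refine ENNReal.ofReal_le_ofReal (le_of_eq_of_le ?_ key)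
  simp [Finset.sum_apply]

section Domination

variable {μ : Measure ℝ} {f g : ℝ → ℝ} {l : ℝ}

lemma integrable_exp_mul_of_le (hf : Measurable f) (hg : Integrable g μ)
    (h : ∀ x, exp (l * f x) ≤ g x) : Integrable (fun x => exp (l * f x)) μ :=
  hg.mono' (hf.const_mul l).exp.aestronglyMeasurable
    (ae_of_all _ fun x => by simpa [abs_of_pos (exp_pos _)] using h x)

lemma mgf_le_integral_of_le (hf : Measurable f) (hg : Integrable g μ)
    (h : ∀ x, exp (l * f x) ≤ g x) : mgf f μ l ≤ ∫ x, g x ∂μ :=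
  integral_mono (integrable_exp_mul_of_le hf hg h) hg h

end Domination

noncomputable def sqBelow (b : ℝ) : ℝ → ℝ := (Icc 0 b).indicator (· ^ 2)

noncomputable def idAbove (b : ℝ) : ℝ → ℝ := (Ioi b).indicator id

section Truncation

variable {b : ℝ}

lemma measurable_sqBelow : Measurable (sqBelow b) :=
  (measurable_id.pow_const 2).indicator measurableSet_Icc

lemma measurable_idAbove : Measurable (idAbove b) :=
  measurable_id.indicator measurableSet_Ioi

lemma sq_eq_sqBelow_add_idAbove_sq {x : ℝ} (hx : 0 ≤ x) :
    x ^ 2 = sqBelow b x + idAbove b x ^ 2 := by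
  by_cases hxb : x ≤ b
  · simp [sqBelow, idAbove, hx, hxb]
  · simp [sqBelow, idAbove, hxb, not_le.1 hxb]

lemma idAbove_nonneg {x : ℝ} (hx : 0 ≤ x) : 0 ≤ idAbove b x :=
  indicator_nonneg (fun _ _ => hx) x

lemma sum_sq_le_sum_sqBelow_add_sq_sum_idAbove {ι : Type*} [Fintype ι] {x : ι → ℝ}
    (hx : ∀ i, 0 ≤ x i) :
    ∑ i, x i ^ 2 ≤ ∑ i, sqBelow b (x i) + (∑ i, idAbove b (x i)) ^ 2 := by
  simp_rw [fun i => sq_eq_sqBelow_add_idAbove_sq (b := b) (hx i), Finset.sum_add_distrib]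
  gcongr
  exact Finset.sum_sq_le_sq_sum_of_nonneg fun i _ => idAbove_nonneg (hx i)

lemma exp_mul_sqBelow_le {l : ℝ} (hl : 0 ≤ l) (hlb : l * b ^ 2 ≤ 1) (x : ℝ) :
    exp (l * sqBelow b x) ≤ 1 + 2 * l * x ^ 2 := by
  have h0 : 0 ≤ l * sqBelow b x := mul_nonneg hl (indicator_nonneg (fun _ _ => sq_nonneg _) x)
  have hsq : l * sqBelow b x ≤ l * x ^ 2 := by
    gcongr; exact indicator_le_self' (fun _ _ => sq_nonneg _) x
  have h1 : l * sqBelow b x ≤ 1 := by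
    refine le_trans ?_ hlb
    gcongr
    by_cases hxb : x ∈ Icc 0 b
    · simpa [sqBelow, hxb] using pow_le_pow_left₀ hxb.1 hxb.2 2
    · simpa [sqBelow, hxb] using sq_nonneg b
  have := abs_exp_sub_one_le (x := l * sqBelow b x) (by rwa [abs_of_nonneg h0])
  rw [abs_of_nonneg h0, abs_of_nonneg (by simpa using one_le_exp h0)] at this
  linarith

lemma mgf_sqBelow_le {l : ℝ} (hl : 0 ≤ l) (hlb : l * b ^ 2 ≤ 1) :
    mgf (sqBelow b) (expMeasure 1) l ≤ 1 + 4 * l := by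
  have hint : Integrable (fun x => 1 + 2 * l * x ^ 2) (expMeasure 1) :=
    (integrable_const 1).add (integrable_sq_expMeasure_one.const_mul _)
  refine (mgf_le_integral_of_le measurable_sqBelow hint (exp_mul_sqBelow_le hl hlb)).trans_eq ?_
  rw [integral_add (integrable_const 1) (integrable_sq_expMeasure_one.const_mul _),
    integral_const_mul, integral_sq_expMeasure_one, integral_const, probReal_univ, one_smul]
  ring

lemma exp_half_mul_idAbove_le (x : ℝ) :
    exp (1 / 2 * idAbove b x) ≤ 1 + exp (-(b / 4)) * exp (3 / 4 * x) := by
  by_cases hxb : b < x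
  · rw [idAbove, indicator_of_mem (mem_Ioi.2 hxb), id, ← exp_add]
    have : exp (1 / 2 * x) ≤ exp (-(b / 4) + 3 / 4 * x) := exp_le_exp.2 (by simp; linarith)
    linarith [exp_pos (-(b / 4) + 3 / 4 * x)]
  · rw [idAbove, indicator_of_notMem (mt mem_Ioi.1 hxb)]
    simp only [mul_zero, exp_zero, le_add_iff_nonneg_right]
    positivity

lemma mgf_idAbove_le : mgf (idAbove b) (expMeasure 1) (1 / 2) ≤ 1 + 4 * exp (-(b / 4)) := by
  have hexp := integrable_exp_mul_expMeasure_one (c := 3 / 4) (by norm_num)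
  have hint : Integrable (fun x => 1 + exp (-(b / 4)) * exp (3 / 4 * x)) (expMeasure 1) :=
    (integrable_const 1).add (hexp.const_mul _)
  refine (mgf_le_integral_of_le measurable_idAbove hint exp_half_mul_idAbove_le).trans_eq ?_
  rw [integral_add (integrable_const 1) (hexp.const_mul _), integral_const_mul,
    show ∫ x, exp (3 / 4 * x) ∂expMeasure 1 = mgf id (expMeasure 1) (3 / 4) from rfl,
    mgf_id_expMeasure_one (by norm_num), integral_const, probReal_univ, one_smul]
  norm_num
  ring

end Truncation

section Deterministic

variable {ι : Type*} [Fintype ι] {x : ι → ℝ}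

lemma sqrt_sum_sq_le_sum (hx : ∀ i, 0 ≤ x i) : √(∑ i, x i ^ 2) ≤ ∑ i, x i :=
  sqrt_le_iff.2 ⟨Finset.sum_nonneg fun i _ => hx i,
    Finset.sum_sq_le_sq_sum_of_nonneg fun i _ => hx i⟩

lemma sum_le_or_le_sum_sqBelow_or_le_sum_idAbove (hx : ∀ i, 0 ≤ x i) {t : ℝ} (ht : 0 < t)
    (b : ℝ) (h : t < √(∑ i, x i ^ 2) / ∑ i, x i) :
    ∑ i, x i ≤ Fintype.card ι / 2 ∨ (t * Fintype.card ι) ^ 2 / 8 ≤ ∑ i, sqBelow b (x i) ∨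
      t * Fintype.card ι / 3 ≤ ∑ i, idAbove b (x i) := by
  set n : ℝ := (Fintype.card ι : ℝ)
  rcases le_or_gt (∑ i, x i) (n / 2) with hsum | hsum
  · exact Or.inl hsum
  have hpos : 0 < ∑ i, x i := lt_of_le_of_lt (by positivity) hsum
  have hlt : t * n / 2 < √(∑ i, x i ^ 2) := by
    calc t * n / 2 < t * ∑ i, x i := by nlinarith
      _ < √(∑ i, x i ^ 2) := (lt_div_iff₀ hpos).1 h
  have hsq := (lt_sqrt (by positivity)).1 hlt
  have hsplit := sum_sq_le_sum_sqBelow_add_sq_sum_idAbove (b := b) hx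
  have hB : 0 ≤ ∑ i, idAbove b (x i) := Finset.sum_nonneg fun i _ => idAbove_nonneg (hx i)
  by_contra! hne
  nlinarith [hne.2.1, hne.2.2]

end Deterministic

section Events

variable {ι Ω : Type*} [Fintype ι] [MeasurableSpace Ω] {P : Measure Ω} {X : ι → Ω → ℝ}

lemma measure_sum_le_half_card_le (hX : ∀ i, Measurable (X i)) (hind : iIndepFun X P)
    (hmap : ∀ i, P.map (X i) = expMeasure 1) :
    P {ω | ∑ i, X i ω ≤ Fintype.card ι / 2} ≤
      ENNReal.ofReal (exp (-(Fintype.card ι / 12))) := by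
  have hint : Integrable (fun x => exp (1 * -x)) (expMeasure 1) := by
    simpa using integrable_exp_mul_expMeasure_one (c := -1) (by norm_num)
  have hmgf : mgf (fun x => -x) (expMeasure 1) 1 = 1 / 2 := by
    rw [show (fun x : ℝ => -x) = -id from rfl, mgf_neg, mgf_id_expMeasure_one (by norm_num)]
    norm_num
  have hset : {ω | ∑ i, X i ω ≤ Fintype.card ι / 2} =
      {ω | -(Fintype.card ι / 2 : ℝ) ≤ ∑ i, -X i ω} := by
    ext ω; simp [Finset.sum_neg_distrib]
  rw [hset]
  refine (measure_sum_comp_ge_le_exp_mul_mgf_pow hX hind hmap measurable_neg zero_le_one hint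
    _).trans (ENNReal.ofReal_le_ofReal ?_)
  simpa [hmgf] using exp_half_mul_half_pow_le (Fintype.card ι)

lemma measure_sum_sqBelow_ge_le (hX : ∀ i, Measurable (X i)) (hind : iIndepFun X P)
    (hmap : ∀ i, P.map (X i) = expMeasure 1) {u : ℝ} (hu : 0 < u)
    (hnu : 40000 * Fintype.card ι ≤ u ^ 2) :
    P {ω | u ^ 2 / 8 ≤ ∑ i, sqBelow (√u / 4) (X i ω)} ≤ ENNReal.ofReal (exp (-(u / 12))) := by
  set n := Fintype.card ι
  have hl : 16 / u * (√u / 4) ^ 2 ≤ 1 := by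
    rw [div_pow, sq_sqrt hu.le]; field_simp; norm_num
  have hint : Integrable (fun x => exp (16 / u * sqBelow (√u / 4) x)) (expMeasure 1) :=
    integrable_exp_mul_of_le measurable_sqBelow
      ((integrable_const 1).add (integrable_sq_expMeasure_one.const_mul _))
      (exp_mul_sqBelow_le (by positivity) hl)
  refine (measure_sum_comp_ge_le_exp_mul_mgf_pow hX hind hmap measurable_sqBelow
    (by positivity) hint _).trans (ENNReal.ofReal_le_ofReal ?_)
  calc exp (-(16 / u) * (u ^ 2 / 8)) * mgf (sqBelow (√u / 4)) (expMeasure 1) (16 / u) ^ n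
      ≤ exp (-(2 * u)) * exp (n * (4 * (16 / u))) := by
        rw [show -(16 / u) * (u ^ 2 / 8) = -(2 * u) by field_simp; ring]
        gcongr
        exact (pow_le_pow_left₀ mgf_nonneg (mgf_sqBelow_le (by positivity) hl) n).trans
          (one_add_pow_le_exp_mul (by positivity) n)
    _ ≤ exp (-(u / 12)) := by
        rw [← exp_add, exp_le_exp]
        have : n * (4 * (16 / u)) ≤ u / 12 := by
          rw [show n * (4 * (16 / u)) = 64 * n / u by ring, div_le_div_iff₀ hu (by norm_num)]
          nlinarith
        linarith

lemma measure_sum_idAbove_ge_le (hX : ∀ i, Measurable (X i)) (hind : iIndepFun X P)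
    (hmap : ∀ i, P.map (X i) = expMeasure 1) {u : ℝ} (hu : 0 < u)
    (hnu : 40000 * Fintype.card ι ≤ u ^ 2) :
    P {ω | u / 3 ≤ ∑ i, idAbove (√u / 4) (X i ω)} ≤ ENNReal.ofReal (exp (-(u / 12))) := by
  set n := Fintype.card ι
  have hint : Integrable (fun x => exp (1 / 2 * idAbove (√u / 4) x)) (expMeasure 1) :=
    integrable_exp_mul_of_le measurable_idAbove
      ((integrable_const 1).add ((integrable_exp_mul_expMeasure_one (by norm_num)).const_mul _))
      exp_half_mul_idAbove_le
  refine (measure_sum_comp_ge_le_exp_mul_mgf_pow hX hind hmap measurable_idAbove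
    (by norm_num) hint _).trans (ENNReal.ofReal_le_ofReal ?_)
  have htail : n * (4 * exp (-(√u / 4 / 4))) ≤ u / 12 := by
    have hexp : exp (-(√u / 4 / 4)) ≤ 512 / u := by
      refine (exp_neg_le_two_div_sq (by positivity)).trans_eq ?_
      rw [div_pow, div_pow, sq_sqrt hu.le]; ring
    calc n * (4 * exp (-(√u / 4 / 4))) ≤ n * (4 * (512 / u)) := by gcongr
      _ ≤ u / 12 := by
        rw [show n * (4 * (512 / u)) = 2048 * n / u by ring, div_le_div_iff₀ hu (by norm_num)]
        nlinarith
  calc exp (-(1 / 2) * (u / 3)) * mgf (idAbove (√u / 4)) (expMeasure 1) (1 / 2) ^ n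
      ≤ exp (-(u / 6)) * exp (n * (4 * exp (-(√u / 4 / 4)))) := by
        rw [show -(1 / 2) * (u / 3) = -(u / 6) by ring]
        gcongr
        exact (pow_le_pow_left₀ mgf_nonneg mgf_idAbove_le n).trans
          (one_add_pow_le_exp_mul (by positivity) n)
    _ ≤ exp (-(u / 12)) := by
        rw [← exp_add, exp_le_exp]
        linarith

end Events

theorem measure_sqrt_sum_sq_div_sum_gt_le {ι Ω : Type*} [Fintype ι] [Nonempty ι]
    [MeasurableSpace Ω] {P : Measure Ω} {X : ι → Ω → ℝ} (hX : ∀ i, Measurable (X i))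
    (hind : iIndepFun X P) (hmap : ∀ i, P.map (X i) = expMeasure 1) {t : ℝ}
    (ht : 200 / √(Fintype.card ι) < t) :
    P {ω | √(∑ i, X i ω ^ 2) / (∑ i, X i ω) > t} ≤
      ENNReal.ofReal (exp (-(1 / 24 * t * Fintype.card ι))) := by
  set n : ℝ := (Fintype.card ι : ℝ)
  have hnonneg : ∀ᵐ ω ∂P, ∀ i, 0 ≤ X i ω := ae_all_iff.2 fun i =>
    ae_of_ae_map (hX i).aemeasurable (by rw [hmap i]; exact ae_nonneg_expMeasure_one)
  rcases le_or_gt 1 t with ht1 | ht1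
  · calc P _ ≤ P ∅ := measure_mono_ae <| hnonneg.mono fun ω hω hE =>
          (div_le_one_of_le₀ (sqrt_sum_sq_le_sum hω) (Finset.sum_nonneg fun i _ => hω i)).not_gt
            (ht1.trans_lt hE)
      _ ≤ _ := by simp
  obtain ⟨hu, hnu⟩ := lt_mul_and_mul_le_mul_sq_of_div_sqrt_lt
    (Nat.one_le_cast.2 Fintype.card_pos) ht
  have ht0 : 0 < t := by
    have : 0 < n := by positivity
    nlinarith
  have hun : t * n ≤ n := by nlinarith [(by positivity : (0 : ℝ) ≤ n)]
  calc P _ ≤ P ({ω | ∑ i, X i ω ≤ n / 2} ∪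
        ({ω | (t * n) ^ 2 / 8 ≤ ∑ i, sqBelow (√(t * n) / 4) (X i ω)} ∪
          {ω | t * n / 3 ≤ ∑ i, idAbove (√(t * n) / 4) (X i ω)})) :=
        measure_mono_ae <| hnonneg.mono fun ω hω hE =>
          sum_le_or_le_sum_sqBelow_or_le_sum_idAbove hω ht0 _ hE
    _ ≤ ENNReal.ofReal (exp (-(n / 12))) +
        (ENNReal.ofReal (exp (-(t * n / 12))) + ENNReal.ofReal (exp (-(t * n / 12)))) :=
        (measure_union_le _ _).trans (add_le_add (measure_sum_le_half_card_le hX hind hmap)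
          ((measure_union_le _ _).trans (add_le_add
            (measure_sum_sqBelow_ge_le hX hind hmap (by linarith) hnu)
            (measure_sum_idAbove_ge_le hX hind hmap (by linarith) hnu))))
    _ ≤ ENNReal.ofReal (3 * exp (-(t * n / 12))) := by
        rw [← ENNReal.ofReal_add (by positivity) (by positivity),
          ← ENNReal.ofReal_add (by positivity) (by positivity)]
        refine ENNReal.ofReal_le_ofReal ?_
        have : exp (-(n / 12)) ≤ exp (-(t * n / 12)) := exp_le_exp.2 (by linarith)
        linarith
    _ ≤ ENNReal.ofReal (exp (-(1 / 24 * t * n))) := by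
        gcongr
        convert three_mul_exp_neg_le (u := t * n) (by linarith) using 3
        ring

theorem stmt9 :
    ∃ T > (0 : ℝ), ∃ c > (0 : ℝ),
      ∀ (N : ℕ), 1 ≤ N →
        ∀ (Ω : Type) (_ : MeasurableSpace Ω) (P : Measure Ω), IsProbabilityMeasure P →
          ∀ X : Fin N → Ω → ℝ,
            (∀ i, Measurable (X i)) →
            iIndepFun X P →
            (∀ i, Measure.map (X i) P = expMeasure 1) →
            ∀ t : ℝ, T / Real.sqrt N < t →
              P {ω | Real.sqrt (∑ i, X i ω ^ 2) / (∑ i, X i ω) > t} ≤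
                ENNReal.ofReal (Real.exp (-(c * t * N))) := by
  refine ⟨200, by norm_num, 1 / 24, by norm_num, fun N hN Ω _ P _ X hX hind hmap t ht => ?_⟩
  have : Nonempty (Fin N) := ⟨⟨0, hN⟩⟩
  simpa using measure_sqrt_sum_sq_div_sum_gt_le hX hind hmap (t := t) (by simpa using ht)
end

section
/- Let g : ℝ → ℝ be a Lipschitz function with Lipschitz constant c, and let A, B be n × n complex self-adjoint matrices. Then ‖g(A) − g(B)‖_HS ≤ c ‖A − B‖_HS, where g(A) is defined by the functional calculus and ‖M‖_HS = √(Tr M*M) is the Hilbert–Schmidt norm. -/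
open scoped Matrix

/-- The Hilbert–Schmidt (Frobenius) norm `‖M‖_HS = √(Tr M*M)` of a complex matrix. -/
noncomputable def hsNorm {m n : ℕ} (M : Matrix (Fin m) (Fin n) ℂ) : ℝ :=
  Real.sqrt ((Mᴴ * M).trace.re)

lemma hsNorm_eq_sum {n : ℕ} (M : Matrix (Fin n) (Fin n) ℂ) :
    hsNorm M = Real.sqrt (∑ i, ∑ j, ‖M i j‖ ^ 2) := by
  unfold hsNorm
  congr 1
  rw [Matrix.trace]
  simp only [Matrix.diag_apply, Matrix.mul_apply, Matrix.conjTranspose_apply]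
  rw [Complex.re_sum]
  rw [Finset.sum_comm]
  congr 1; ext i
  rw [Complex.re_sum]
  congr 1; ext j
  rw [Complex.star_def, ← Complex.normSq_eq_conj_mul_self, Complex.ofReal_re,
    Complex.normSq_eq_norm_sq]

lemma hsNorm_unitary_left {n : ℕ} (U M : Matrix (Fin n) (Fin n) ℂ)
    (hU : Uᴴ * U = 1) : hsNorm (U * M) = hsNorm M := by
  unfold hsNorm
  rw [Matrix.conjTranspose_mul, Matrix.mul_assoc, ← Matrix.mul_assoc Uᴴ, hU, Matrix.one_mul]

lemma hsNorm_unitary_right {n : ℕ} (U M : Matrix (Fin n) (Fin n) ℂ)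
    (hU : U * Uᴴ = 1) : hsNorm (M * U) = hsNorm M := by
  unfold hsNorm
  have : ((M * U)ᴴ * (M * U)).trace = (Mᴴ * M).trace := by
    rw [Matrix.conjTranspose_mul, ← Matrix.mul_assoc, Matrix.trace_mul_comm,
      ← Matrix.mul_assoc, ← Matrix.mul_assoc, hU, Matrix.one_mul]
  rw [this]

lemma keyfact {n : ℕ} (U V D D' : Matrix (Fin n) (Fin n) ℂ)
    (hU2 : U * Uᴴ = 1) (hV2 : V * Vᴴ = 1) :
    U * (D * (Uᴴ * V) - (Uᴴ * V) * D') * Vᴴ = U * D * Uᴴ - V * D' * Vᴴ := by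
  rw [Matrix.mul_sub, Matrix.sub_mul]
  congr 1
  · simp only [Matrix.mul_assoc]
    rw [hV2, Matrix.mul_one]
  · simp only [← Matrix.mul_assoc]
    rw [hU2, Matrix.one_mul]

theorem stmt14 (n : ℕ) (g : ℝ → ℝ) (c : ℝ)
    (hg : ∀ x y : ℝ, |g x - g y| ≤ c * |x - y|)
    (A B : Matrix (Fin n) (Fin n) ℂ) (hA : A.IsHermitian) (hB : B.IsHermitian) :
    hsNorm (hA.cfc g - hB.cfc g) ≤ c * hsNorm (A - B) := by
  have hc : 0 ≤ c := by
    have := hg 0 1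
    have h0 : (0:ℝ) ≤ |g 0 - g 1| := abs_nonneg _
    simp at this
    linarith
  set U : Matrix (Fin n) (Fin n) ℂ := (hA.eigenvectorUnitary : Matrix (Fin n) (Fin n) ℂ) with hUdef
  set V : Matrix (Fin n) (Fin n) ℂ := (hB.eigenvectorUnitary : Matrix (Fin n) (Fin n) ℂ) with hVdef
  have hU1 : Uᴴ * U = 1 := by
    simpa [hUdef, Matrix.star_eq_conjTranspose] using Unitary.coe_star_mul_self hA.eigenvectorUnitary
  have hU2 : U * Uᴴ = 1 := by
    simpa [hUdef, Matrix.star_eq_conjTranspose] using Unitary.coe_mul_star_self hA.eigenvectorUnitary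
  have hV1 : Vᴴ * V = 1 := by
    simpa [hVdef, Matrix.star_eq_conjTranspose] using Unitary.coe_star_mul_self hB.eigenvectorUnitary
  have hV2 : V * Vᴴ = 1 := by
    simpa [hVdef, Matrix.star_eq_conjTranspose] using Unitary.coe_mul_star_self hB.eigenvectorUnitary
  set W : Matrix (Fin n) (Fin n) ℂ := Uᴴ * V with hW
  set DA : (ℝ → ℝ) → Matrix (Fin n) (Fin n) ℂ :=
    fun f => Matrix.diagonal ((RCLike.ofReal : ℝ → ℂ) ∘ f ∘ hA.eigenvalues) with hDA
  set DB : (ℝ → ℝ) → Matrix (Fin n) (Fin n) ℂ :=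
    fun f => Matrix.diagonal ((RCLike.ofReal : ℝ → ℂ) ∘ f ∘ hB.eigenvalues) with hDB
  -- express the two differences
  have hgdiff : hA.cfc g - hB.cfc g = U * (DA g * W - W * DB g) * Vᴴ := by
    rw [hW, keyfact U V _ _ hU2 hV2]
    rw [Matrix.IsHermitian.cfc, Matrix.IsHermitian.cfc]
    rfl
  have hABdiff : A - B = U * (DA id * W - W * DB id) * Vᴴ := by
    rw [hW, keyfact U V _ _ hU2 hV2]
    congr 1
    · exact hA.spectral_theorem
    · exact hB.spectral_theorem
  -- unitary invariance
  have hnorm : ∀ f : ℝ → ℝ,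
      hsNorm (U * (DA f * W - W * DB f) * Vᴴ) = hsNorm (DA f * W - W * DB f) := by
    intro f
    rw [hsNorm_unitary_right _ _ (by rw [Matrix.conjTranspose_conjTranspose]; exact hV1),
      hsNorm_unitary_left _ _ hU1]
  -- entry formula
  have hentry : ∀ (f : ℝ → ℝ) (i j : Fin n),
      (DA f * W - W * DB f) i j
      = (RCLike.ofReal (f (hA.eigenvalues i) - f (hB.eigenvalues j)) : ℂ) * W i j := by
    intro f i j
    rw [Matrix.sub_apply, hDA, hDB, Matrix.diagonal_mul, Matrix.mul_diagonal]
    simp only [Function.comp_apply, map_sub]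
    ring
  rw [hgdiff, hABdiff, hnorm g, hnorm id, hsNorm_eq_sum, hsNorm_eq_sum]
  have hterm : ∀ i j : Fin n,
      ‖(DA g * W - W * DB g) i j‖ ^ 2 ≤ c ^ 2 * ‖(DA id * W - W * DB id) i j‖ ^ 2 := by
    intro i j
    rw [hentry g i j, hentry id i j]
    simp only [norm_mul, RCLike.norm_ofReal, id_eq, Real.norm_eq_abs, mul_pow]
    set a := hA.eigenvalues i
    set b := hB.eigenvalues j
    have h1 := hg a b
    have h2 : (0:ℝ) ≤ |g a - g b| := abs_nonneg _
    have key2 : |g a - g b| ^ 2 ≤ c ^ 2 * |a - b| ^ 2 := by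
      nlinarith [abs_nonneg (a - b)]
    calc |g a - g b| ^ 2 * ‖W i j‖ ^ 2 ≤ (c ^ 2 * |a - b| ^ 2) * ‖W i j‖ ^ 2 :=
          mul_le_mul_of_nonneg_right key2 (sq_nonneg _)
      _ = c ^ 2 * (|a - b| ^ 2 * ‖W i j‖ ^ 2) := by ring
  calc Real.sqrt (∑ i, ∑ j, ‖(DA g * W - W * DB g) i j‖ ^ 2)
      ≤ Real.sqrt (c ^ 2 * ∑ i, ∑ j, ‖(DA id * W - W * DB id) i j‖ ^ 2) := by
        apply Real.sqrt_le_sqrt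
        rw [Finset.mul_sum]
        apply Finset.sum_le_sum
        intro i _
        rw [Finset.mul_sum]
        exact Finset.sum_le_sum fun j _ => hterm i j
    _ = c * Real.sqrt (∑ i, ∑ j, ‖(DA id * W - W * DB id) i j‖ ^ 2) := by
        rw [Real.sqrt_mul (by positivity), Real.sqrt_sq hc]
end

section
/- Let a > 0, τ > 0 and let z ∈ ℂ with Im(z) ≠ 0. Then there exists exactly one complex number w with Im(z)·Im(w) > 0 satisfying w = 1 / (a − z − aτ − a z τ w), i.e. satisfying the quadratic equation a z τ w² + (z − a + aτ) w + 1 = 0. -/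
/-!
The substitution `u = -1/w - aτ`, a bijection of `ℂ` that preserves the sign of the imaginary
part, turns the equation into `u² - (z - a - aτ) u + a²τ = 0`. The two roots of this quadratic
have imaginary parts summing to `Im z`, so one of them lies in the half-plane of `z`; their
product is the real number `a²τ ≥ 0`, so they cannot both lie in it.
-/

open Complex

lemma exists_add_eq_and_mul_eq {K : Type*} [Field K] [IsAlgClosed K] [NeZero (2 : K)] (b c : K) :
    ∃ x y : K, x + y = b ∧ x * y = c := by
  obtain ⟨x, hx⟩ := exists_quadratic_eq_zero (a := 1) (b := -b) (c := c) one_ne_zero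
    (IsAlgClosed.exists_eq_mul_self _)
  obtain ⟨y, -, hsum, hprod⟩ := vieta_formula_quadratic (b := b) (c := c) (x := x)
    (by linear_combination hx)
  exact ⟨x, y, hsum, hprod⟩

lemma add_eq_and_mul_eq_of_ne {R : Type*} [CommRing R] [NoZeroDivisors R] {b c x y : R}
    (hx : x * x - b * x + c = 0) (hy : y * y - b * y + c = 0) (hne : x ≠ y) :
    x + y = b ∧ x * y = c := by
  have hfactor : (x - y) * (x + y - b) = 0 := by linear_combination hx - hy
  have hsum : x + y = b :=
    sub_eq_zero.1 ((mul_eq_zero.1 hfactor).resolve_left (sub_ne_zero.2 hne))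
  exact ⟨hsum, by linear_combination -hx + x * hsum⟩

lemma Complex.im_mul_im_nonpos_of_mul_eq_ofReal {x y : ℂ} {r : ℝ} (hr : 0 ≤ r)
    (h : x * y = r) : x.im * y.im ≤ 0 := by
  have hre : x.re * y.re - x.im * y.im = r := by simpa using congrArg re h
  have him : x.re * y.im + x.im * y.re = 0 := by simpa using congrArg im h
  by_contra! hpos
  have hre_pos : 0 < x.re * y.re := by linarith
  have hcross : (x.re * y.re) * (x.im * y.im) = -(x.im * y.re) ^ 2 := by
    linear_combination (x.im * y.re) * him
  nlinarith [mul_pos hre_pos hpos, sq_nonneg (x.im * y.re)]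

lemma Complex.existsUnique_mul_self_sub_mul_add_ofReal_eq_zero {b : ℂ} (hb : b.im ≠ 0) {r : ℝ}
    (hr : 0 ≤ r) : ∃! u : ℂ, 0 < b.im * u.im ∧ u * u - b * u + r = 0 := by
  refine existsUnique_of_exists_of_unique ?_ ?_
  · obtain ⟨x, y, hsum, hprod⟩ := exists_add_eq_and_mul_eq b r
    have hsum_im : b.im * x.im + b.im * y.im = b.im * b.im := by rw [← mul_add, ← add_im, hsum]
    have : 0 < b.im * b.im := mul_self_pos.2 hb
    rcases lt_or_ge 0 (b.im * x.im) with hx | hx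
    · exact ⟨x, hx, by rw [← hsum, ← hprod]; ring⟩
    · exact ⟨y, by linarith, by rw [← hsum, ← hprod]; ring⟩
  · rintro u v ⟨hu, hu_root⟩ ⟨hv, hv_root⟩
    by_contra hne
    have hopp := im_mul_im_nonpos_of_mul_eq_ofReal hr (add_eq_and_mul_eq_of_ne hu_root hv_root hne).2
    nlinarith [mul_pos hu hv, mul_self_nonneg b.im]

lemma Complex.neg_inv_im_pos_iff (s : ℝ) (v : ℂ) : 0 < s * (-v⁻¹).im ↔ 0 < s * v.im := by
  rw [neg_im, inv_im, neg_div, neg_neg, mul_div_assoc']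
  rcases eq_or_ne v 0 with rfl | hv
  · simp
  · exact div_pos_iff_of_pos_right (normSq_pos.2 hv)

lemma Complex.shifted_neg_inv_root_iff (a τ : ℝ) (z : ℂ) {w : ℂ} (hw : w ≠ 0) :
    (-w⁻¹ - a * τ) * (-w⁻¹ - a * τ) - (z - a - a * τ) * (-w⁻¹ - a * τ) + ((a ^ 2 * τ : ℝ) : ℂ) = 0 ↔
      (a : ℂ) * z * τ * w ^ 2 + (z - a + a * τ) * w + 1 = 0 := by
  have hquot : (-w⁻¹ - a * τ) * (-w⁻¹ - a * τ) - (z - a - a * τ) * (-w⁻¹ - a * τ)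
      + ((a ^ 2 * τ : ℝ) : ℂ) = ((a : ℂ) * z * τ * w ^ 2 + (z - a + a * τ) * w + 1) / w ^ 2 := by
    field_simp
    push_cast
    ring
  rw [hquot, div_eq_zero_iff, or_iff_left (pow_ne_zero 2 hw)]

theorem stmt18_general (a τ : ℝ) (hτ : 0 < τ) (z : ℂ) (hz : z.im ≠ 0) :
    ∃! w : ℂ, 0 < z.im * w.im ∧
      (a : ℂ) * z * (τ : ℂ) * w ^ 2 + (z - (a : ℂ) + (a : ℂ) * (τ : ℂ)) * w + 1 = 0 := by
  let e : ℂ ≃ ℂ := (Equiv.inv ℂ).trans ((Equiv.neg ℂ).trans (Equiv.subRight ((a : ℂ) * τ)))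
  have hb : (z - a - a * τ).im = z.im := by simp
  refine (e.existsUnique_congr fun w => ?_).2
    (existsUnique_mul_self_sub_mul_add_ofReal_eq_zero (hb ▸ hz) (by positivity : 0 ≤ a ^ 2 * τ))
  have he : e w = -w⁻¹ - a * τ := rfl
  have he_im : (e w).im = (-w⁻¹).im := by simp [he]
  rw [he_im, hb, neg_inv_im_pos_iff, he]
  refine and_congr_right fun hw => (shifted_neg_inv_root_iff a τ z ?_).symm
  rintro rfl
  simp at hw

theorem stmt18 (a τ : ℝ) (ha : 0 < a) (hτ : 0 < τ) (z : ℂ) (hz : z.im ≠ 0) :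
    ∃! w : ℂ, 0 < z.im * w.im ∧
      (a : ℂ) * z * (τ : ℂ) * w ^ 2 + (z - (a : ℂ) + (a : ℂ) * (τ : ℂ)) * w + 1 = 0 :=
  stmt18_general a τ hτ z hz
end
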